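/- Let f : F_2^k → F_2^l be a surjective linear map, k ≥ 2, t ≥ 1, and let P ⊆ F_2^r be a code indexed by F_2^k with d_2(p_i, p_j) ≥ max(2t − d_2(u_i, u_j), 0) whenever f(u_i) ≠ f(u_j). Then r ≥ (8t/3)(1 − 2^{−l}) − k + s/(3·2^{k−2}), where s = Σ_{u ∈ ker f} w_2(u). -/

import Mathlib

/-!
Sum `d₂(p u, p v)` over all ordered pairs `(u, v)` of messages. Each of the `r` windows of
`π₂(p u)` takes one of four values, so by Cauchy–Schwarz at most `3/4` of all pairs disagree on
it: the sum is at most `3 r 4^k / 4`. On the other hand `d₂(u, v) = w₂(u - v)` and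
`f u ≠ f v ↔ u - v ∉ ker f`, so summing the hypothesis gives at least
`2^k ∑_{w ∉ ker f} (2t - w₂(w))`, where `|ker f| = 2^(k-l)` and `∑_w w₂(w) = 3k 2^(k-2)`
because for `k ≥ 2` each window of a uniformly random word is nonzero with probability `3/4`.
-/

open Finset

/-- The b-symbol read vector of `u`: the length-`k` vector of cyclic windows of length `b`. -/
def piB (F : Type*) (k b : ℕ) (u : Fin k → F) : Fin k → (Fin b → F) :=
  fun i j => u ⟨(i.val + j.val) % k, Nat.mod_lt _ i.pos⟩

/-- The b-symbol distance between `u` and `v`. -/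
def dB (F : Type*) [DecidableEq F] (k b : ℕ) (u v : Fin k → F) : ℕ :=
  hammingDist (piB F k b u) (piB F k b v)

/-- The b-symbol weight of `u`: the number of nonzero cyclic windows of length `b`. -/
def wB (F : Type*) [DecidableEq F] [Zero F] (k b : ℕ) (u : Fin k → F) : ℕ :=
  (Finset.univ.filter (fun i : Fin k => piB F k b u i ≠ 0)).card

section Plotkin

variable {α β ι : Type*} [Fintype α] [Fintype β] [DecidableEq β] [Fintype ι]

theorem sum_card_filter_eq_eq_sum_sq (a : α → β) :
    ∑ u, #{v | a u = a v} = ∑ y, #{u | a u = y} ^ 2 := by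
  rw [← sum_fiberwise univ a]
  refine sum_congr rfl fun y _ => ?_
  rw [sq, ← smul_eq_mul, ← sum_const]
  refine sum_congr rfl fun u hu => ?_
  simp only [(mem_filter.1 hu).2, eq_comm]

theorem card_mul_sum_card_filter_ne_le (a : α → β) :
    Fintype.card β * ∑ u, #{v | a u ≠ a v} ≤ (Fintype.card β - 1) * Fintype.card α ^ 2 := by
  have hsplit : ∑ u, #{v | a u = a v} + ∑ u, #{v | a u ≠ a v} = Fintype.card α ^ 2 := by
    simp only [← sum_add_distrib, card_filter_add_card_filter_not, card_univ, sum_const,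
      smul_eq_mul, sq]
  have hfibers : ∑ y, #{u | a u = y} = Fintype.card α :=
    (card_eq_sum_card_fiberwise fun u _ => mem_univ (a u)).symm
  have hcs : Fintype.card α ^ 2 ≤ Fintype.card β * ∑ u, #{v | a u = a v} := by
    rw [sum_card_filter_eq_eq_sum_sq, ← hfibers]
    exact sq_sum_le_card_mul_sum_sq
  rw [Nat.sub_one_mul, ← hsplit, mul_add]
  omega

theorem card_mul_sum_sum_hammingDist_le (c : α → ι → β) :
    Fintype.card β * ∑ u, ∑ v, hammingDist (c u) (c v)
      ≤ (Fintype.card β - 1) * Fintype.card ι * Fintype.card α ^ 2 := by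
  have hswap : ∑ u, ∑ v, hammingDist (c u) (c v) = ∑ i, ∑ u, #{v | c u i ≠ c v i} := by
    simp only [hammingDist, card_filter]
    exact (sum_congr rfl fun _ _ => sum_comm).trans sum_comm
  calc Fintype.card β * ∑ u, ∑ v, hammingDist (c u) (c v)
      = ∑ i, Fintype.card β * ∑ u, #{v | c u i ≠ c v i} := by rw [hswap, mul_sum]
    _ ≤ ∑ _i : ι, (Fintype.card β - 1) * Fintype.card α ^ 2 :=
      sum_le_sum fun i _ => card_mul_sum_card_filter_ne_le (c · i)
    _ = (Fintype.card β - 1) * Fintype.card ι * Fintype.card α ^ 2 := by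
      rw [sum_const, card_univ, smul_eq_mul]; ring

end Plotkin

theorem AddMonoidHom.card_fiber_mul_card_of_surjective {G M : Type*} [AddGroup G] [Fintype G]
    [AddMonoid M] [Fintype M] [DecidableEq M] (g : G →+ M) (hg : Function.Surjective g) (y : M) :
    #{x | g x = y} * Fintype.card M = Fintype.card G := by
  calc #{x | g x = y} * Fintype.card M = ∑ z, #{x | g x = z} := by
        rw [sum_congr rfl fun z _ => AddMonoidHom.card_fiber_eq_of_mem_range g (hg z) (hg y),
          sum_const, card_univ, smul_eq_mul, mul_comm]
    _ = Fintype.card G := (card_eq_sum_card_fiberwise fun x _ => mem_univ (g x)).symm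

theorem Fintype.sum_sum_sub {G M : Type*} [AddGroup G] [Fintype G] [AddCommMonoid M]
    (h : G → M) : ∑ u, ∑ v, h (u - v) = Fintype.card G • ∑ w, h w := by
  calc ∑ u, ∑ v, h (u - v) = ∑ _u : G, ∑ w, h w :=
        Finset.sum_congr rfl fun u _ => Fintype.sum_equiv (Equiv.subLeft u) _ h fun _ => rfl
    _ = Fintype.card G • ∑ w, h w := by rw [sum_const, card_univ]

section SymbolPair

variable {F : Type*} {k b : ℕ}

def windowIndex (i : Fin k) (j : Fin b) : Fin k := ⟨(i.val + j.val) % k, Nat.mod_lt _ i.pos⟩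

theorem windowIndex_injective (hb : b ≤ k) (i : Fin k) :
    Function.Injective (windowIndex (b := b) i) := by
  intro j j' h
  have hmod : i.val + j.val ≡ i.val + j'.val [MOD k] := Fin.val_eq_of_eq h
  exact Fin.ext <| (Nat.ModEq.add_left_cancel' _ hmod).eq_of_lt_of_lt (by omega) (by omega)

theorem card_pow_mul_sum_sum_dB_le {α : Type*} [Fintype α] [Fintype F] [DecidableEq F] {r : ℕ}
    (c : α → Fin r → F) :
    Fintype.card F ^ b * ∑ u, ∑ v, dB F r b (c u) (c v)
      ≤ (Fintype.card F ^ b - 1) * r * Fintype.card α ^ 2 := by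
  have h := card_mul_sum_sum_hammingDist_le fun u => piB F r b (c u)
  simp only [Fintype.card_fun, Fintype.card_fin] at h
  exact h

variable [AddGroup F]

theorem piB_sub (u v : Fin k → F) : piB F k b (u - v) = piB F k b u - piB F k b v := rfl

variable (F k b) in
def piBAddHom (i : Fin k) : (Fin k → F) →+ (Fin b → F) where
  toFun u := piB F k b u i
  map_zero' := rfl
  map_add' _ _ := rfl

theorem piBAddHom_surjective (hb : b ≤ k) (i : Fin k) :
    Function.Surjective (piBAddHom F k b i) :=
  -- `piB F k b u i` is definitionally `u ∘ windowIndex i`.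
  (windowIndex_injective hb i).surjective_comp_right

variable [DecidableEq F]

theorem dB_eq_wB_sub (u v : Fin k → F) : dB F k b u v = wB F k b (u - v) := by
  simp only [dB, wB, hammingDist, piB_sub, Pi.sub_apply, ne_eq, sub_eq_zero]

variable [Fintype F]

theorem card_piB_eq_zero (hb : b ≤ k) (i : Fin k) :
    #{u | piB F k b u i = 0} = Fintype.card F ^ (k - b) := by
  have h := (piBAddHom F k b i).card_fiber_mul_card_of_surjective (piBAddHom_surjective hb i) 0
  simp only [Fintype.card_fun, Fintype.card_fin] at h
  rw [← pow_sub_mul_pow _ hb] at h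
  exact Nat.eq_of_mul_eq_mul_right (pow_pos Fintype.card_pos b) h

theorem sum_wB (hb : b ≤ k) :
    ∑ u, wB F k b u = k * (Fintype.card F ^ k - Fintype.card F ^ (k - b)) := by
  have hswap : ∑ u, wB F k b u = ∑ i : Fin k, #{u | piB F k b u i ≠ 0} := by
    simp only [wB, card_filter]
    exact sum_comm
  have hcompl (i : Fin k) :
      #{u | piB F k b u i ≠ 0} = Fintype.card F ^ k - Fintype.card F ^ (k - b) := by
    have h := card_filter_add_card_filter_not (s := univ) (fun u => piB F k b u i = 0)
    rw [card_univ, Fintype.card_fun, Fintype.card_fin, card_piB_eq_zero hb i] at h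
    simp only [ne_eq]
    omega
  rw [hswap, sum_congr rfl fun i _ => hcompl i, sum_const, card_univ, Fintype.card_fin,
    smul_eq_mul]

omit [AddGroup F] [DecidableEq F] [Fintype F] in
theorem sum_wB_zmod_two (hk : 2 ≤ k) : ∑ u, wB (ZMod 2) k 2 u = 3 * k * 2 ^ (k - 2) := by
  rw [sum_wB hk, ZMod.card, ← pow_sub_mul_pow 2 hk,
    show 2 ^ (k - 2) * 2 ^ 2 - 2 ^ (k - 2) = 3 * 2 ^ (k - 2) by omega]
  ring

theorem card_pow_mul_le_sum_sum_dB {G Φ F' : Type*} [AddGroup G] [DecidableEq G]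
    [FunLike Φ (Fin k → F) G] [AddMonoidHomClass Φ (Fin k → F) G] [DecidableEq F'] {r b' : ℕ}
    (f : Φ) (p : (Fin k → F) → Fin r → F') (c : ℝ)
    (hp : ∀ u v, f u ≠ f v → c - dB F k b u v ≤ dB F' r b' (p u) (p v)) :
    (Fintype.card F ^ k : ℝ) * (c * (Fintype.card F ^ k - #{w | f w = 0})
        - (∑ w, (wB F k b w : ℝ) - ∑ w with f w = 0, (wB F k b w : ℝ)))
      ≤ ∑ u, ∑ v, (dB F' r b' (p u) (p v) : ℝ) := by
  have hpair (u v : Fin k → F) :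
      (if f (u - v) ≠ 0 then c - wB F k b (u - v) else 0) ≤ dB F' r b' (p u) (p v) := by
    split_ifs with h
    · rw [← dB_eq_wB_sub]
      exact hp u v (by rwa [map_sub, sub_ne_zero] at h)
    · positivity
  have hcard : (#{w | f w ≠ 0} : ℝ) = Fintype.card F ^ k - #{w | f w = 0} := by
    rw [eq_sub_iff_add_eq, ← Nat.cast_add, add_comm, card_filter_add_card_filter_not]
    simp
  have hsum : ∑ w with f w ≠ 0, (wB F k b w : ℝ)
      = ∑ w, (wB F k b w : ℝ) - ∑ w with f w = 0, (wB F k b w : ℝ) := by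
    rw [eq_sub_iff_add_eq', sum_filter_add_sum_filter_not]
  calc (Fintype.card F ^ k : ℝ) * (c * (Fintype.card F ^ k - #{w | f w = 0})
        - (∑ w, (wB F k b w : ℝ) - ∑ w with f w = 0, (wB F k b w : ℝ)))
      = Fintype.card (Fin k → F) • ∑ w, if f w ≠ 0 then c - wB F k b w else 0 := by
        rw [← sum_filter, sum_sub_distrib, sum_const, ← hsum, ← hcard, nsmul_eq_mul,
          nsmul_eq_mul, Fintype.card_fun, Fintype.card_fin]
        push_cast
        ring
    _ = ∑ u, ∑ v, if f (u - v) ≠ 0 then c - wB F k b (u - v) else 0 :=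
        (Fintype.sum_sum_sub fun w => if f w ≠ 0 then c - (wB F k b w : ℝ) else 0).symm
    _ ≤ ∑ u, ∑ v, (dB F' r b' (p u) (p v) : ℝ) :=
        sum_le_sum fun u _ => sum_le_sum fun v _ => hpair u v

end SymbolPair

theorem plotkin_bound_FCSPC_binary_general
    (k l r t : ℕ) (hk : 2 ≤ k)
    (f : (Fin k → ZMod 2) →ₗ[ZMod 2] (Fin l → ZMod 2)) (hf : Function.Surjective f)
    (p : (Fin k → ZMod 2) → (Fin r → ZMod 2))
    (hp : ∀ u v : Fin k → ZMod 2, f u ≠ f v →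
      (dB (ZMod 2) r 2 (p u) (p v) : ℤ) ≥ max (2 * (t : ℤ) - dB (ZMod 2) k 2 u v) 0) :
    (r : ℝ) ≥ (8 * (t : ℝ) / 3) * (1 - ((2 : ℝ) ^ l)⁻¹) - k +
      (∑ u ∈ Finset.univ.filter (fun u : Fin k → ZMod 2 => f u = 0), (wB (ZMod 2) k 2 u : ℝ)) /
        (3 * (2 : ℝ) ^ (k - 2)) := by
  set K := #{u | f u = 0}
  set s := ∑ u ∈ univ.filter (fun u : Fin k → ZMod 2 => f u = 0), (wB (ZMod 2) k 2 u : ℝ)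
  have hK : (K : ℝ) * 2 ^ l = 2 ^ k := by
    have h := f.toAddMonoidHom.card_fiber_mul_card_of_surjective hf 0
    simp only [Fintype.card_fun, ZMod.card, Fintype.card_fin] at h
    exact_mod_cast h
  have hup : 4 * ∑ u, ∑ v, (dB (ZMod 2) r 2 (p u) (p v) : ℝ) ≤ 3 * r * (2 ^ k) ^ 2 := by
    have h := card_pow_mul_sum_sum_dB_le (b := 2) p
    simp only [ZMod.card, Fintype.card_fun, Fintype.card_fin] at h
    exact_mod_cast h
  have hlow := card_pow_mul_le_sum_sum_dB f p (2 * t) fun u v huv => by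
    exact_mod_cast (le_max_left _ _).trans (hp u v huv)
  rw [ZMod.card, ← Nat.cast_sum, sum_wB_zmod_two hk] at hlow
  push_cast at hlow
  have hmain : 4 * (2 * t * (2 ^ k - K) - (3 * k * 2 ^ (k - 2) - s)) ≤ 3 * r * (2 : ℝ) ^ k := by
    have h2k : (0 : ℝ) < 2 ^ k := by positivity
    nlinarith
  have hinv : ((2 : ℝ) ^ l)⁻¹ = K / 2 ^ k := by
    rw [eq_div_iff (by positivity), ← hK]
    field_simp
  have hpow : (2 : ℝ) ^ k = 4 * 2 ^ (k - 2) := by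
    rw [← pow_sub_mul_pow 2 hk]; ring
  rw [hpow] at hmain
  rw [ge_iff_le, hinv, hpow, ← sub_nonneg]
  field_simp
  linarith

theorem plotkin_bound_FCSPC_binary
    (k l r t : ℕ) (hk : 2 ≤ k) (ht : 1 ≤ t)
    (f : (Fin k → ZMod 2) →ₗ[ZMod 2] (Fin l → ZMod 2)) (hf : Function.Surjective f)
    (p : (Fin k → ZMod 2) → (Fin r → ZMod 2))
    (hp : ∀ u v : Fin k → ZMod 2, f u ≠ f v →
      (dB (ZMod 2) r 2 (p u) (p v) : ℤ) ≥ max (2 * (t : ℤ) - dB (ZMod 2) k 2 u v) 0) :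
    (r : ℝ) ≥ (8 * (t : ℝ) / 3) * (1 - ((2 : ℝ) ^ l)⁻¹) - k +
      (∑ u ∈ Finset.univ.filter (fun u : Fin k → ZMod 2 => f u = 0), (wB (ZMod 2) k 2 u : ℝ)) /
        (3 * (2 : ℝ) ^ (k - 2)) :=
  plotkin_bound_FCSPC_binary_general k l r t hk f hf p hp
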